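/- arXiv:math/0607249 — 4 statements merged into one kernel-verified Lean document; each statement's English description precedes it below -/
import Mathlib

section
/- For b in NA, the graph G(b) is disconnected if and only if b is a Betti A-degree of I_A (i.e., some minimal binomial generating set of I_A contains an element of A-degree b). -/
open MvPolynomial

noncomputable section

/-- The `A`-degree of a monomial exponent vector `u`. -/
def degA {m n : ℕ} (A : Fin m → Fin n → ℤ) (u : Fin m →₀ ℕ) : Fin n → ℤ :=
  ∑ i, (u i : ℤ) • A i

/-- The affine semigroup `ℕA` is pointed. -/
def IsPointed {m n : ℕ} (A : Fin m → Fin n → ℤ) : Prop :=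
  ∀ u v : Fin m →₀ ℕ, degA A u + degA A v = 0 → degA A u = 0

/-- The toric ideal `I_A`. -/
def toricIdeal (K : Type*) [Field K] {m n : ℕ} (A : Fin m → Fin n → ℤ) :
    Ideal (MvPolynomial (Fin m) K) :=
  Ideal.span {f | ∃ u v : Fin m →₀ ℕ, degA A u = degA A v ∧
    f = monomial u (1 : K) - monomial v 1}

/-- `b` belongs to the affine semigroup `ℕA`. -/
def inNA {m n : ℕ} (A : Fin m → Fin n → ℤ) (b : Fin n → ℤ) : Prop :=
  ∃ u : Fin m →₀ ℕ, degA A u = b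

/-- `c` is strictly smaller than `b` in the natural partial order on `ℕA`. -/
def ltA {m n : ℕ} (A : Fin m → Fin n → ℤ) (c b : Fin n → ℤ) : Prop :=
  (∃ e, inNA A e ∧ b = c + e) ∧ c ≠ b

/-- The ideal `I_{A,b}` generated by binomials of `A`-degree strictly less than `b`. -/
def subIdeal (K : Type*) [Field K] {m n : ℕ} (A : Fin m → Fin n → ℤ) (b : Fin n → ℤ) :
    Ideal (MvPolynomial (Fin m) K) :=
  Ideal.span {f | ∃ u v : Fin m →₀ ℕ, degA A u = degA A v ∧ ltA A (degA A u) b ∧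
    f = monomial u (1 : K) - monomial v 1}

/-- The graph `G(b)` on the fiber `deg_A^{-1}(b)`. -/
def fiberGraph (K : Type*) [Field K] {m n : ℕ} (A : Fin m → Fin n → ℤ) (b : Fin n → ℤ) :
    SimpleGraph {u : Fin m →₀ ℕ // degA A u = b} where
  Adj x y := x ≠ y ∧ monomial x.1 (1 : K) - monomial y.1 1 ∈ subIdeal K A b
  symm := by
    constructor
    rintro x y ⟨hne, hmem⟩
    exact ⟨hne.symm, by simpa [neg_sub] using neg_mem hmem⟩
  loopless := ⟨fun x h => h.1 rfl⟩

/-- A set of binomials of `I_A`. -/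
def IsBinomialSet (K : Type*) [Field K] {m n : ℕ} (A : Fin m → Fin n → ℤ)
    (S : Set (MvPolynomial (Fin m) K)) : Prop :=
  ∀ f ∈ S, ∃ u v : Fin m →₀ ℕ, degA A u = degA A v ∧ f = monomial u (1 : K) - monomial v 1

/-- A minimal system of binomial generators of `I_A`. -/
def IsMinimalGenSet (K : Type*) [Field K] {m n : ℕ} (A : Fin m → Fin n → ℤ)
    (S : Set (MvPolynomial (Fin m) K)) : Prop :=
  IsBinomialSet K A S ∧ Ideal.span S = toricIdeal K A ∧
    ∀ T : Set (MvPolynomial (Fin m) K), T ⊂ S → Ideal.span T ≠ toricIdeal K A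

/-- `b` is a Betti `A`-degree. -/
def IsBettiDegree (K : Type*) [Field K] {m n : ℕ} (A : Fin m → Fin n → ℤ)
    (b : Fin n → ℤ) : Prop :=
  ∃ S, IsMinimalGenSet K A S ∧ ∃ u v : Fin m →₀ ℕ, degA A u = b ∧ degA A v = b ∧
    monomial u (1 : K) - monomial v 1 ∈ S

/-- `b` is the `A`-degree of a nonzero binomial of `I_A`. -/
def IsBinomialDegree {m n : ℕ} (A : Fin m → Fin n → ℤ) (b : Fin n → ℤ) : Prop :=
  ∃ u v : Fin m →₀ ℕ, u ≠ v ∧ degA A u = b ∧ degA A v = b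

/-- `b` is a minimal binomial `A`-degree. -/
def IsMinimalBinomialDegree {m n : ℕ} (A : Fin m → Fin n → ℤ) (b : Fin n → ℤ) : Prop :=
  IsBinomialDegree A b ∧ ∀ c, IsBinomialDegree A c → ¬ ltA A c b

/-- An indispensable binomial of `I_A`: it belongs, up to sign, to every binomial
generating set of `I_A`. -/
def IsIndispensableBinomial (K : Type*) [Field K] {m n : ℕ} (A : Fin m → Fin n → ℤ)
    (f : MvPolynomial (Fin m) K) : Prop :=
  f ∈ toricIdeal K A ∧
    ∀ S, IsBinomialSet K A S → Ideal.span S = toricIdeal K A → f ∈ S ∨ -f ∈ S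

/-- The number of minimal systems of binomial generators of `I_A`, where the
sign of a binomial does not count (a system is recorded as the set of its
sign-pairs `{f, -f}`). -/
def nuIA (K : Type*) [Field K] {m n : ℕ} (A : Fin m → Fin n → ℤ) : ℕ :=
  Set.ncard {U : Set (Set (MvPolynomial (Fin m) K)) |
    ∃ S, IsMinimalGenSet K A S ∧ U = (fun f => ({f, -f} : Set (MvPolynomial (Fin m) K))) '' S}

/-- The number of elements of `A`-degree `b` in the generating set `S`. -/
def betti0 (K : Type*) [Field K] {m n : ℕ} (A : Fin m → Fin n → ℤ)
    (S : Set (MvPolynomial (Fin m) K)) (b : Fin n → ℤ) : ℕ :=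
  Set.ncard {f ∈ S | ∃ u v : Fin m →₀ ℕ, degA A u = b ∧ degA A v = b ∧
    f = monomial u (1 : K) - monomial v 1}

/-- The set of exponents of monomials of the monomial ideal `M_A`. -/
def MAset {m n : ℕ} (A : Fin m → Fin n → ℤ) : Set (Fin m →₀ ℕ) :=
  {u | ∃ v : Fin m →₀ ℕ, v ≠ u ∧ degA A v = degA A u}

/-- The minimal monomial generating set `T_A` of `M_A` (monomials of `M_A`
minimal under divisibility). -/
def TA {m n : ℕ} (A : Fin m → Fin n → ℤ) : Set (Fin m →₀ ℕ) :=
  {u ∈ MAset A | ∀ w ∈ MAset A, (∀ i, w i ≤ u i) → w = u}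


/-!
Everything rests on the `A`-grading: if `g = ∑ rᵢ sᵢ` with binomials `sᵢ` and `g` is homogeneous
of degree `c`, then `g = ∑ (rᵢ)_{c - deg sᵢ} sᵢ` only involves the `sᵢ` of degree `≤ c`.
If no element of a minimal generating set has degree `b`, every binomial of degree `b` therefore
lies in `I_{A,b}`, and `G(b)` is complete. Conversely, if `G(b)` is connected, a minimal generator
`f` of degree `b` lies in `I_{A,b}`; since `ℕA` is pointed, no generator of `I_{A,b}` has degree
`≥ b`, so `I_{A,b}` is generated by the other elements and `f` is redundant.
-/

namespace MvPolynomial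

variable {σ R M : Type*} [CommSemiring R]

theorem weightedHomogeneousComponent_mul_of_isWeightedHomogeneous [AddCancelCommMonoid M]
    {w : σ → M} {s : MvPolynomial σ R} {d : M} (hs : IsWeightedHomogeneous w s d)
    (e : M) (r : MvPolynomial σ R) :
    weightedHomogeneousComponent w (e + d) (r * s) = weightedHomogeneousComponent w e r * s := by
  classical
  let _ := weightedGradedAlgebra R w
  simpa only [DirectSum.decompose, Equiv.coe_fn_mk, weightedDecomposition.decompose'_apply] using
    DirectSum.coe_decompose_mul_add_of_right_mem (weightedHomogeneousSubmodule R w) (a := r)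
      (i := e) hs

theorem exists_weight_eq_of_weightedHomogeneousComponent_ne_zero [AddCommMonoid M]
    {w : σ → M} {e : M} {r : MvPolynomial σ R} (h : weightedHomogeneousComponent w e r ≠ 0) :
    ∃ d : σ →₀ ℕ, Finsupp.weight w d = e := by
  by_contra! hne
  exact h (weightedHomogeneousComponent_eq_zero' e r fun d _ => hne d)

end MvPolynomial

section Toric

variable {K : Type*} [Field K] {m n : ℕ} {A : Fin m → Fin n → ℤ}

def leA (A : Fin m → Fin n → ℤ) (c b : Fin n → ℤ) : Prop :=
  ∃ e, inNA A e ∧ b = c + e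

theorem weight_eq_degA (u : Fin m →₀ ℕ) : Finsupp.weight A u = degA A u := by
  rw [Finsupp.weight_apply, Finsupp.sum_fintype _ _ fun i => zero_smul ℕ (A i)]
  exact Finset.sum_congr rfl fun i _ => (Nat.cast_smul_eq_nsmul ℤ (u i) (A i)).symm

theorem isWeightedHomogeneous_binomial {u v : Fin m →₀ ℕ} (h : degA A u = degA A v) :
    IsWeightedHomogeneous A (monomial u (1 : K) - monomial v 1) (degA A u) :=
  (isWeightedHomogeneous_monomial A u 1 (weight_eq_degA u)).sub
    (isWeightedHomogeneous_monomial A v 1 (by rw [weight_eq_degA, h]))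

theorem IsPointed.not_leA_of_ltA (hA : IsPointed A) {b c : Fin n → ℤ} (h : ltA A c b) :
    ¬ leA A b c := by
  rintro ⟨e', ⟨z', rfl⟩, hc⟩
  obtain ⟨⟨_, ⟨z, rfl⟩, hb⟩, hne⟩ := h
  have hz : degA A z = 0 := hA z z' (by linear_combination -hb - hc)
  exact hne (by rw [hb, hz, add_zero])

theorem mem_of_isWeightedHomogeneous_of_mem_span {S : Set (MvPolynomial (Fin m) K)}
    (hS : IsBinomialSet K A S) {J : Ideal (MvPolynomial (Fin m) K)} {c : Fin n → ℤ}
    (hJ : ∀ u v, monomial u (1 : K) - monomial v 1 ∈ S → degA A u = degA A v →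
      leA A (degA A u) c → monomial u (1 : K) - monomial v 1 ∈ J)
    {g : MvPolynomial (Fin m) K} (hgc : IsWeightedHomogeneous A g c) (hg : g ∈ Ideal.span S) :
    g ∈ J := by
  rw [← hgc.weightedHomogeneousComponent_same]
  obtain ⟨k, r, s, rfl⟩ := Submodule.mem_span_set'.mp hg
  rw [map_sum]
  refine J.sum_mem fun i _ => ?_
  obtain ⟨u, v, huv, hs⟩ := hS (s i) (s i).2
  rw [smul_eq_mul, hs, ← sub_add_cancel c (degA A u),
    weightedHomogeneousComponent_mul_of_isWeightedHomogeneous (isWeightedHomogeneous_binomial huv)]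
  by_cases h0 : weightedHomogeneousComponent A (c - degA A u) (r i) = 0
  · rw [h0, zero_mul]
    exact J.zero_mem
  obtain ⟨d, hd⟩ := exists_weight_eq_of_weightedHomogeneousComponent_ne_zero h0
  refine J.mul_mem_left _ (hJ u v (hs ▸ (s i).2) huv ⟨c - degA A u, ⟨d, ?_⟩, by abel⟩)
  rw [← weight_eq_degA, hd]

theorem IsMinimalGenSet.notMem_span_sdiff_singleton {S : Set (MvPolynomial (Fin m) K)}
    (hS : IsMinimalGenSet K A S) {f : MvPolynomial (Fin m) K} (hf : f ∈ S) :
    f ∉ Ideal.span (S \ {f}) := fun h =>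
  hS.2.2 _ (Set.sdiff_singleton_ssubset.mpr hf) <| by
    calc Ideal.span (S \ {f}) = Ideal.span (insert f (S \ {f})) :=
          (Submodule.span_insert_eq_span h).symm
      _ = toricIdeal K A := by rw [Set.insert_sdiff_singleton, Set.insert_eq_of_mem hf, hS.2.1]

theorem exists_isMinimalGenSet (K : Type*) [Field K] (A : Fin m → Fin n → ℤ) :
    ∃ S, IsMinimalGenSet K A S := by
  obtain ⟨t, htB, ht⟩ := (Submodule.fg_span_iff_fg_span_finset_subset _).mp
    (IsNoetherian.noetherian (toricIdeal K A))
  have hfin :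
      {T | T ⊆ (t : Set (MvPolynomial (Fin m) K)) ∧ Ideal.span T = toricIdeal K A}.Finite :=
    t.finite_toSet.finite_subsets.subset fun T hT => hT.1
  obtain ⟨S, hS⟩ := hfin.exists_minimal ⟨t, subset_rfl, ht.symm⟩
  exact ⟨S, fun f hf => htB (hS.prop.1 hf), hS.prop.2,
    fun T hTS hT => hTS.2 (hS.2 ⟨hTS.1.trans hS.prop.1, hT⟩ hTS.1)⟩

theorem binomial_mem_subIdeal_of_reachable {b : Fin n → ℤ}
    {x y : {u : Fin m →₀ ℕ // degA A u = b}}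
    (h : (fiberGraph K A b).Reachable x y) :
    monomial x.1 (1 : K) - monomial y.1 1 ∈ subIdeal K A b := by
  obtain ⟨w⟩ := h
  induction w with
  | nil => simp
  | @cons p q r hadj _ ih =>
    rw [← sub_add_sub_cancel _ (monomial q.1 (1 : K))]
    exact add_mem hadj.2 ih

theorem binomial_mem_subIdeal_of_forall_notMem {S : Set (MvPolynomial (Fin m) K)}
    (hS : IsBinomialSet K A S) (hspan : Ideal.span S = toricIdeal K A) {b : Fin n → ℤ}
    (hSb : ∀ u v, degA A u = b → degA A v = b → monomial u (1 : K) - monomial v 1 ∉ S)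
    {u v : Fin m →₀ ℕ} (hu : degA A u = b) (hv : degA A v = b) :
    monomial u (1 : K) - monomial v 1 ∈ subIdeal K A b := by
  have huv : degA A u = degA A v := hu.trans hv.symm
  refine mem_of_isWeightedHomogeneous_of_mem_span hS ?_ (hu ▸ isWeightedHomogeneous_binomial huv)
    (hspan ▸ Ideal.subset_span ⟨u, v, huv, rfl⟩)
  intro u' v' hS' huv' hle
  by_cases hu' : degA A u' = b
  · exact absurd hS' (hSb u' v' hu' (huv' ▸ hu'))
  · exact Ideal.subset_span ⟨u', v', huv', ⟨hle, hu'⟩, rfl⟩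

theorem preconnected_fiberGraph_of_not_isBettiDegree {b : Fin n → ℤ}
    (hb : ¬ IsBettiDegree K A b) : (fiberGraph K A b).Preconnected := by
  obtain ⟨S, hS⟩ := exists_isMinimalGenSet K A
  intro x y
  by_cases hxy : x = y
  · exact hxy ▸ .refl x
  exact SimpleGraph.Adj.reachable ⟨hxy, binomial_mem_subIdeal_of_forall_notMem hS.1 hS.2.1
    (fun u v hu hv huv => hb ⟨S, hS, u, v, hu, hv, huv⟩) x.2 y.2⟩

theorem not_preconnected_fiberGraph_of_isBettiDegree (hA : IsPointed A) {b : Fin n → ℤ}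
    (hb : IsBettiDegree K A b) : ¬ (fiberGraph K A b).Preconnected := by
  obtain ⟨S, hS, uf, vf, huf, hvf, hfS⟩ := hb
  set f := monomial uf (1 : K) - monomial vf 1
  intro hconn
  apply hS.notMem_span_sdiff_singleton hfS
  by_cases hf0 : f = 0
  · rw [hf0]
    exact zero_mem _
  have hfb : IsWeightedHomogeneous A f b := by
    rw [← huf]
    exact isWeightedHomogeneous_binomial (huf.trans hvf.symm)
  have hsub : subIdeal K A b ≤ Ideal.span (S \ {f}) := by
    refine Ideal.span_le.mpr ?_
    rintro _ ⟨p, q, hpq, hlt, rfl⟩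
    refine mem_of_isWeightedHomogeneous_of_mem_span hS.1 ?_ (isWeightedHomogeneous_binomial hpq)
      (by rw [hS.2.1]; exact Ideal.subset_span ⟨p, q, hpq, rfl⟩)
    intro u v huvS huv hle
    refine Ideal.subset_span ⟨huvS, fun hsf => hA.not_leA_of_ltA hlt ?_⟩
    have hs := isWeightedHomogeneous_binomial (K := K) huv
    rw [Set.mem_singleton_iff.mp hsf] at hs
    rw [← hs.inj_right hf0 hfb]
    exact hle
  exact hsub <|
    binomial_mem_subIdeal_of_reachable (x := ⟨uf, huf⟩) (y := ⟨vf, hvf⟩) (hconn _ _)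

end Toric

theorem statement1_general {K : Type*} [Field K] {m n : ℕ} (A : Fin m → Fin n → ℤ)
    (hA : IsPointed A) (b : Fin n → ℤ) :
    ¬ (fiberGraph K A b).Preconnected ↔ IsBettiDegree K A b :=
  ⟨not_imp_comm.mp preconnected_fiberGraph_of_not_isBettiDegree,
    not_preconnected_fiberGraph_of_isBettiDegree hA⟩

/-- `G(b)` is disconnected if and only if `b` is a Betti `A`-degree. -/
theorem statement1 {K : Type*} [Field K] {m n : ℕ} (A : Fin m → Fin n → ℤ)
    (hA : IsPointed A) (b : Fin n → ℤ) (hb : inNA A b) :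
    ¬ (fiberGraph K A b).Preconnected ↔ IsBettiDegree K A b :=
  statement1_general A hA b
end
end

section
/- An A-degree b with nonempty fiber containing a binomial of I_A is a minimal binomial A-degree if and only if every connected component of G(b) is a singleton (equivalently I_{A,b} contains no binomial x^u - x^v with deg_A(x^u) = b). -/
open MvPolynomial

noncomputable section

/-! A nonzero binomial of degree `c < b` multiplied by a monomial of degree `b - c` is a binomial
of degree `b` in `I_{A,b}`, i.e. an edge of `G(b)`. Conversely, if no binomial degree lies below
`b`, then `I_{A,b} = 0` and `G(b)` has no edges. -/

lemma degA_add {m n : ℕ} (A : Fin m → Fin n → ℤ) (u v : Fin m →₀ ℕ) :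
    degA A (u + v) = degA A u + degA A v := by
  simp only [degA, Finsupp.coe_add, Pi.add_apply, Nat.cast_add, add_smul, Finset.sum_add_distrib]

lemma monomial_sub_monomial_add_mem_subIdeal (K : Type*) [Field K] {m n : ℕ}
    (A : Fin m → Fin n → ℤ) {b : Fin n → ℤ} {u v : Fin m →₀ ℕ} (huv : degA A u = degA A v)
    (hlt : ltA A (degA A u) b) (w : Fin m →₀ ℕ) :
    monomial (u + w) (1 : K) - monomial (v + w) 1 ∈ subIdeal K A b := by
  have hgen : monomial u (1 : K) - monomial v 1 ∈ subIdeal K A b :=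
    Ideal.subset_span ⟨u, v, huv, hlt, rfl⟩
  simpa only [mul_sub, monomial_mul, mul_one, add_comm w] using
    Ideal.mul_mem_left _ (monomial w (1 : K)) hgen

lemma subIdeal_eq_bot (K : Type*) [Field K] {m n : ℕ} (A : Fin m → Fin n → ℤ)
    {b : Fin n → ℤ} (hb : ∀ c, IsBinomialDegree A c → ¬ ltA A c b) :
    subIdeal K A b = ⊥ := by
  refine le_bot_iff.mp (Ideal.span_le.mpr ?_)
  rintro f ⟨u, v, huv, hlt, rfl⟩
  by_cases h : u = v
  · simp [h]
  · exact absurd hlt (hb _ ⟨u, v, h, rfl, huv.symm⟩)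

theorem statement3_general {K : Type*} [Field K] {m n : ℕ} (A : Fin m → Fin n → ℤ)
    (b : Fin n → ℤ) (hb : IsBinomialDegree A b) :
    IsMinimalBinomialDegree A b ↔
      ∀ x y : {u : Fin m →₀ ℕ // degA A u = b}, ¬ (fiberGraph K A b).Adj x y := by
  constructor
  · rintro ⟨-, hmin⟩ x y ⟨hne, hmem⟩
    rw [subIdeal_eq_bot K A hmin, Ideal.mem_bot, sub_eq_zero] at hmem
    exact hne (Subtype.ext (monomial_left_injective one_ne_zero hmem))
  · refine fun hG => ⟨hb, ?_⟩
    rintro c ⟨u, v, hne, rfl, hv⟩ hlt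
    obtain ⟨⟨e, ⟨w, rfl⟩, rfl⟩, -⟩ := id hlt
    refine hG ⟨u + w, degA_add A u w⟩ ⟨v + w, by rw [degA_add, hv]⟩ ⟨?_, ?_⟩
    · simpa using hne
    · exact monomial_sub_monomial_add_mem_subIdeal K A hv.symm hlt w

/-- A binomial `A`-degree `b` is a minimal binomial `A`-degree if and only if
every connected component of `G(b)` is a singleton (i.e. `G(b)` has no edges). -/
theorem statement3 {K : Type*} [Field K] {m n : ℕ} (A : Fin m → Fin n → ℤ)
    (hA : IsPointed A) (b : Fin n → ℤ) (hb : IsBinomialDegree A b) :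
    IsMinimalBinomialDegree A b ↔
      ∀ x y : {u : Fin m →₀ ℕ // degA A u = b}, ¬ (fiberGraph K A b).Adj x y :=
  statement3_general A b hb
end
end

section
/- If b is not a minimal binomial A-degree but is the A-degree of some binomial in I_A, then G(b) has a connected component with at least two vertices. -/
open MvPolynomial

noncomputable section

lemma monomial_add_sub_monomial_add_mem {σ R : Type*} [CommRing R]
    {I : Ideal (MvPolynomial σ R)} {u v : σ →₀ ℕ} (h : monomial u (1 : R) - monomial v 1 ∈ I)
    (t : σ →₀ ℕ) : monomial (u + t) (1 : R) - monomial (v + t) 1 ∈ I := by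
  have key : monomial (u + t) (1 : R) - monomial (v + t) 1 =
      monomial t 1 * (monomial u 1 - monomial v 1) := by
    rw [mul_sub, monomial_mul, monomial_mul, one_mul, add_comm t u, add_comm t v]
  exact key ▸ I.mul_mem_left _ h

lemma monomial_sub_monomial_mem_subIdeal (K : Type*) [Field K] {m n : ℕ}
    {A : Fin m → Fin n → ℤ} {b : Fin n → ℤ} {u v : Fin m →₀ ℕ} (huv : degA A u = degA A v)
    (hlt : ltA A (degA A u) b) : monomial u (1 : K) - monomial v 1 ∈ subIdeal K A b :=
  Ideal.subset_span ⟨u, v, huv, hlt, rfl⟩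

lemma exists_lt_of_not_isMinimalBinomialDegree {m n : ℕ} {A : Fin m → Fin n → ℤ}
    {b : Fin n → ℤ} (hb : IsBinomialDegree A b) (hmin : ¬ IsMinimalBinomialDegree A b) :
    ∃ c, IsBinomialDegree A c ∧ ltA A c b := by
  simpa [IsMinimalBinomialDegree, hb] using hmin

lemma exists_fiberGraph_adj_of_ltA (K : Type*) [Field K] {m n : ℕ} {A : Fin m → Fin n → ℤ}
    {b c : Fin n → ℤ} (hc : IsBinomialDegree A c) (hcb : ltA A c b) :
    ∃ x y : {u : Fin m →₀ ℕ // degA A u = b}, (fiberGraph K A b).Adj x y := by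
  obtain ⟨w, w', hne, rfl, hw'⟩ := hc
  obtain ⟨_, ⟨t, rfl⟩, hbe⟩ := hcb.1
  refine ⟨⟨w + t, by rw [degA_add, hbe]⟩, ⟨w' + t, by rw [degA_add, hw', hbe]⟩, ?_, ?_⟩
  · exact fun h => hne (add_right_cancel (congrArg Subtype.val h))
  · exact monomial_add_sub_monomial_add_mem
      (monomial_sub_monomial_mem_subIdeal K hw'.symm hcb) t

theorem statement4_general {K : Type*} [Field K] {m n : ℕ} (A : Fin m → Fin n → ℤ)
    (b : Fin n → ℤ) (hb : IsBinomialDegree A b)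
    (hmin : ¬ IsMinimalBinomialDegree A b) :
    ∃ x y : {u : Fin m →₀ ℕ // degA A u = b}, (fiberGraph K A b).Adj x y := by
  obtain ⟨c, hc, hcb⟩ := exists_lt_of_not_isMinimalBinomialDegree hb hmin
  exact exists_fiberGraph_adj_of_ltA K hc hcb

/-- If `b` is a non-minimal binomial `A`-degree, then some connected component of
`G(b)` has at least two vertices (i.e. `G(b)` has an edge). -/
theorem statement4 {K : Type*} [Field K] {m n : ℕ} (A : Fin m → Fin n → ℤ)
    (hA : IsPointed A) (b : Fin n → ℤ) (hb : IsBinomialDegree A b)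
    (hmin : ¬ IsMinimalBinomialDegree A b) :
    ∃ x y : {u : Fin m →₀ ℕ // degA A u = b}, (fiberGraph K A b).Adj x y :=
  statement4_general A b hb hmin
end
end

section
/- If the toric ideal I_A is generated by its indispensable binomials, then no two elements of a minimal generating set of I_A have the same A-degree. -/
open MvPolynomial

noncomputable section

/-!
Every element of a minimal generating set `S` is indispensable: the indispensable members of
`S` already generate `I_A`, so by minimality they are all of `S`. An indispensable binomial
`x^w - x^z` has a fiber consisting of `w` and `z` only, since for any third `c` of the same
`A`-degree it could be traded for `x^w - x^c` and `x^c - x^z`. Hence two elements of `S` of the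
same `A`-degree are, up to sign, the same binomial, and a minimal generating set does not
contain both `f` and `-f ≠ f`.
-/

section MinimalSpanningSet

variable {R : Type*} [CommRing R] {S : Set R}

theorem notMem_span_diff_singleton_of_minimal
    (hmin : ∀ T ⊂ S, Ideal.span T ≠ Ideal.span S) {x : R} (hx : x ∈ S) :
    x ∉ Ideal.span (S \ {x}) := by
  intro hspan
  refine hmin (S \ {x}) (Set.sdiff_singleton_ssubset.mpr hx) ?_
  change Submodule.span R _ = Submodule.span R _
  rw [← Submodule.span_insert_eq_span hspan, Set.insert_sdiff_singleton, Set.insert_eq_of_mem hx]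

theorem zero_notMem_of_minimal (hmin : ∀ T ⊂ S, Ideal.span T ≠ Ideal.span S) :
    (0 : R) ∉ S :=
  fun h0 => notMem_span_diff_singleton_of_minimal hmin h0 (Ideal.zero_mem _)

theorem neg_eq_self_of_minimal (hmin : ∀ T ⊂ S, Ideal.span T ≠ Ideal.span S) {x : R}
    (hx : x ∈ S) (hnx : -x ∈ S) : -x = x := by
  by_contra hne
  apply notMem_span_diff_singleton_of_minimal hmin hx
  simpa using neg_mem (Ideal.subset_span (s := S \ {x}) ⟨hnx, hne⟩)

end MinimalSpanningSet

section Toric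

variable {K : Type*} [Field K] {m n : ℕ} {A : Fin m → Fin n → ℤ}

theorem IsMinimalGenSet.minimal {S : Set (MvPolynomial (Fin m) K)}
    (hS : IsMinimalGenSet K A S) :
    ∀ T ⊂ S, Ideal.span T ≠ Ideal.span S :=
  hS.2.1 ▸ hS.2.2

theorem isIndispensableBinomial_neg {f : MvPolynomial (Fin m) K}
    (hf : IsIndispensableBinomial K A f) : IsIndispensableBinomial K A (-f) :=
  ⟨neg_mem hf.1, fun S hS hspan => by simpa only [neg_neg, or_comm] using hf.2 S hS hspan⟩

theorem IsMinimalGenSet.isIndispensableBinomial_of_mem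
    (hgen : Ideal.span {f | IsIndispensableBinomial K A f} = toricIdeal K A)
    {S : Set (MvPolynomial (Fin m) K)} (hS : IsMinimalGenSet K A S)
    {g : MvPolynomial (Fin m) K} (hg : g ∈ S) : IsIndispensableBinomial K A g := by
  obtain ⟨hbin, hspan, hmin⟩ := hS
  set S₀ := {s ∈ S | IsIndispensableBinomial K A s}
  have hspan₀ : Ideal.span S₀ = toricIdeal K A := by
    refine le_antisymm (hspan ▸ Ideal.span_mono fun s hs => hs.1) ?_
    rw [← hgen]
    refine Ideal.span_le.mpr fun h hh => ?_
    rcases hh.2 S hbin hspan with hhS | hhS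
    · exact Ideal.subset_span ⟨hhS, hh⟩
    · simpa using neg_mem (Ideal.subset_span (s := S₀) ⟨hhS, isIndispensableBinomial_neg hh⟩)
  have hS₀ : S₀ = S := by
    by_contra hne
    exact hmin S₀ (LE.le.ssubset_of_ne (fun s hs => hs.1) hne) hspan₀
  exact (hS₀ ▸ hg : g ∈ S₀).2

theorem IsIndispensableBinomial.eq_or_eq_of_degA_eq {w z c : Fin m →₀ ℕ}
    (hg : IsIndispensableBinomial K A (monomial w 1 - monomial z 1))
    (hwz : degA A w = degA A z) (hc : degA A c = degA A w) : c = w ∨ c = z := by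
  by_contra! hne
  obtain ⟨hcw, hcz⟩ := hne
  set g : MvPolynomial (Fin m) K := monomial w 1 - monomial z 1
  set B : Set (MvPolynomial (Fin m) K) := {f | ∃ u v : Fin m →₀ ℕ, degA A u = degA A v ∧
    f = monomial u (1 : K) - monomial v 1}
  -- `x^w - x^c` and `x^c - x^z` differ from `±g` at the coefficient of `x^c`, where `g` vanishes.
  have hg_c : coeff c g = 0 := by simp [g, coeff_monomial, hcw.symm, hcz.symm]
  have h₁ : monomial w 1 - monomial c 1 ∈ B \ {g, -g} := by
    refine ⟨⟨w, c, hc.symm, rfl⟩, ?_⟩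
    rintro (h | h) <;>
      simpa [hg_c, coeff_monomial, hcw.symm] using congrArg (coeff c) h
  have h₂ : monomial c 1 - monomial z 1 ∈ B \ {g, -g} := by
    refine ⟨⟨c, z, hc.trans hwz, rfl⟩, ?_⟩
    rintro (h | h) <;>
      simpa [hg_c, coeff_monomial, hcz.symm] using congrArg (coeff c) h
  have hg_mem : g ∈ Ideal.span (B \ {g, -g}) := by
    have hsum := add_mem (Ideal.subset_span h₁) (Ideal.subset_span h₂)
    rwa [sub_add_sub_cancel] at hsum
  have hspan : Ideal.span (B \ {g, -g}) = toricIdeal K A := by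
    refine le_antisymm (Ideal.span_mono Set.sdiff_subset) (Ideal.span_le.mpr fun f hf => ?_)
    by_cases hfg : f ∈ ({g, -g} : Set _)
    · rcases hfg with rfl | rfl
      · exact hg_mem
      · exact neg_mem hg_mem
    · exact Ideal.subset_span ⟨hf, hfg⟩
  have hbin : IsBinomialSet K A (B \ {g, -g}) := fun f hf => hf.1
  rcases hg.2 _ hbin hspan with h | h <;> exact h.2 (by simp)

end Toric

theorem statement13_general {K : Type*} [Field K] {m n : ℕ} (A : Fin m → Fin n → ℤ)
    (hgen : Ideal.span {f | IsIndispensableBinomial K A f} = toricIdeal K A)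
    (S : Set (MvPolynomial (Fin m) K)) (hS : IsMinimalGenSet K A S) :
    ∀ f ∈ S, ∀ g ∈ S, ∀ b : Fin n → ℤ,
      (∃ u v : Fin m →₀ ℕ, degA A u = b ∧ degA A v = b ∧
        f = monomial u (1 : K) - monomial v 1) →
      (∃ u v : Fin m →₀ ℕ, degA A u = b ∧ degA A v = b ∧
        g = monomial u (1 : K) - monomial v 1) →
      f = g := by
  rintro f hf g hg b ⟨u, v, hu, hv, rfl⟩ ⟨w, z, hw, hz, rfl⟩
  have hind := hS.isIndispensableBinomial_of_mem hgen hg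
  have hwz : degA A w = degA A z := hw.trans hz.symm
  have hf0 : monomial u (1 : K) - monomial v 1 ≠ 0 :=
    fun h => zero_notMem_of_minimal hS.minimal (h ▸ hf)
  rcases hind.eq_or_eq_of_degA_eq hwz (hu.trans hw.symm) with rfl | rfl <;>
    rcases hind.eq_or_eq_of_degA_eq hwz (hv.trans hw.symm) with rfl | rfl
  · simp at hf0
  · rfl
  · rw [← neg_eq_self_of_minimal hS.minimal hf (by rwa [neg_sub]), neg_sub]
  · simp at hf0

/-- If `I_A` is generated by its indispensable binomials then no two elements of
a minimal generating set have the same `A`-degree. -/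
theorem statement13 {K : Type*} [Field K] {m n : ℕ} (A : Fin m → Fin n → ℤ)
    (hA : IsPointed A)
    (hgen : Ideal.span {f | IsIndispensableBinomial K A f} = toricIdeal K A)
    (S : Set (MvPolynomial (Fin m) K)) (hS : IsMinimalGenSet K A S) :
    ∀ f ∈ S, ∀ g ∈ S, ∀ b : Fin n → ℤ,
      (∃ u v : Fin m →₀ ℕ, degA A u = b ∧ degA A v = b ∧
        f = monomial u (1 : K) - monomial v 1) →
      (∃ u v : Fin m →₀ ℕ, degA A u = b ∧ degA A v = b ∧
        g = monomial u (1 : K) - monomial v 1) →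
      f = g :=
  statement13_general A hgen S hS
end
end
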